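/- arXiv:2301.05201 — 2 statements merged into one kernel-verified Lean document; each statement's English description precedes it below -/
import Mathlib

section
/- Let h ∈ L¹_loc(ℝⁿ) be such that Mh(x) < ∞ a.e., and let 0 < μ < 1. Then (Mh)^μ ∈ A₁ with ‖(Mh)^μ‖_{A₁} ≤ C_{n}/(1 − μ) for a dimensional constant C_n. -/
open MeasureTheory ENNReal NNReal Set Filter

noncomputable def wInt {n : ℕ} (v : (Fin n → ℝ) → ℝ) (E : Set (Fin n → ℝ)) : ℝ≥0∞ :=
  ∫⁻ x in E, ENNReal.ofReal (v x)

noncomputable def maxOp {n : ℕ} (h : (Fin n → ℝ) → ℝ) (x : Fin n → ℝ) : ℝ≥0∞ :=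
  ⨆ (c : Fin n → ℝ) (r : ℝ) (_ : 0 < r) (_ : x ∈ Metric.closedBall c r),
    (∫⁻ y in Metric.closedBall c r, ENNReal.ofReal |h y|) / volume (Metric.closedBall c r)

def IsA1 {n : ℕ} (u : (Fin n → ℝ) → ℝ) (C : ℝ) : Prop :=
  (∀ x, 0 ≤ u x) ∧ MeasureTheory.LocallyIntegrable u volume ∧
    ∀ (c : Fin n → ℝ) (r : ℝ), 0 < r →
      wInt u (Metric.closedBall c r) ≤
        ENNReal.ofReal C *
          essInf (fun y => ENNReal.ofReal (u y)) (volume.restrict (Metric.closedBall c r)) *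
          volume (Metric.closedBall c r)

noncomputable def distribF {n : ℕ} (v : (Fin n → ℝ) → ℝ) (g : (Fin n → ℝ) → ℝ≥0∞)
    (y : ℝ≥0∞) : ℝ≥0∞ :=
  wInt v {x | y < g x}

noncomputable def wkLorentz {n : ℕ} (p : ℝ) (v : (Fin n → ℝ) → ℝ)
    (g : (Fin n → ℝ) → ℝ≥0∞) : ℝ≥0∞ :=
  ⨆ y : ℝ≥0, (y : ℝ≥0∞) * (distribF v g y) ^ (1 / p)

noncomputable def lorentzOne {n : ℕ} (p : ℝ) (v : (Fin n → ℝ) → ℝ)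
    (g : (Fin n → ℝ) → ℝ≥0∞) : ℝ≥0∞ :=
  ENNReal.ofReal p * ∫⁻ y in Set.Ioi (0:ℝ), (distribF v g (ENNReal.ofReal y)) ^ (1 / p)

noncomputable def ofFun {n : ℕ} (f : (Fin n → ℝ) → ℝ) : (Fin n → ℝ) → ℝ≥0∞ :=
  fun x => ENNReal.ofReal |f x|

noncomputable def l1Norm {n : ℕ} (u f : (Fin n → ℝ) → ℝ) : ℝ≥0∞ :=
  ∫⁻ x, ENNReal.ofReal |f x| * ENNReal.ofReal (u x)

/-!
Fix a ball `B` (for the sup metric, so a cube) and a point `z ∈ B`, and split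
`h = h 𝟙_{3B} + h 𝟙_{(3B)ᶜ}`. A ball through a point of `B` that reaches outside `3B` is larger
than `B`, so its triple contains `z`; hence `M(h 𝟙_{(3B)ᶜ}) ≤ 3ⁿ Mh(z)` on `B`. For the local part,
the Vitali covering lemma gives the weak type (1,1) bound `t |{Mg > t}| ≤ 4ⁿ ‖g‖₁`, and
Kolmogorov's inequality turns it into `∫_B (Mg)^μ ≤ (1 - μ)⁻¹ (4ⁿ ‖g‖₁)^μ |B|^(1-μ)`; with
`‖h 𝟙_{3B}‖₁ ≤ 3ⁿ |B| Mh(z)` this is at most `12ⁿ (1 - μ)⁻¹ |B| Mh(z)^μ`. Since `z ∈ B` is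
arbitrary, the average of `(Mh)^μ` over `B` is bounded by `C (1 - μ)⁻¹` times its essential
infimum on `B`.
-/

open Metric Module

lemma ENNReal.rpow_le_self_of_one_le {x : ℝ≥0∞} (hx : 1 ≤ x) {p : ℝ} (hp : p ≤ 1) : x ^ p ≤ x :=
  (ENNReal.rpow_le_rpow_of_exponent_le hx hp).trans_eq (ENNReal.rpow_one x)

lemma ofReal_abs_indicator {α : Type*} (h : α → ℝ) (S : Set α) (y : α) :
    ENNReal.ofReal |S.indicator h y| = S.indicator (fun y => ENNReal.ofReal |h y|) y := by
  by_cases hy : y ∈ S <;> simp [hy]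

lemma le_mul_essInf_of_forall_mem {X : Type*} [MeasurableSpace X] {ν : Measure X} {s : Set X}
    (hs : MeasurableSet s) {f : X → ℝ≥0∞} {a k : ℝ≥0∞} (hk0 : k ≠ 0) (hk : k ≠ ⊤)
    (h : ∀ z ∈ s, a ≤ k * f z) : a ≤ k * essInf f (ν.restrict s) := by
  have : a / k ≤ essInf f (ν.restrict s) := le_essInf_of_ae_le _ <|
    (ae_restrict_iff' hs).2 (ae_of_all _ fun z hz => ENNReal.div_le_of_le_mul' (h z hz))
  rw [mul_comm]
  exact (ENNReal.div_le_iff_le_mul (Or.inl hk0) (Or.inl hk)).1 this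

lemma setLIntegral_Ioi_le_of_le_min_rpow {φ : ℝ → ℝ≥0∞} {p v d : ℝ} (hp0 : 0 < p) (hp1 : p < 1)
    (hv : 0 < v) (hd : 0 ≤ d) (hφv : ∀ t > 0, φ t ≤ ENNReal.ofReal v)
    (h_tail : ∀ t > 0, φ t ≤ ENNReal.ofReal (d * t ^ (-p⁻¹))) :
    ∫⁻ t in Ioi 0, φ t ≤ ENNReal.ofReal (d ^ p * v ^ (1 - p) / (1 - p)) := by
  rcases hd.eq_or_lt with rfl | hd
  · calc ∫⁻ t in Ioi 0, φ t ≤ ∫⁻ _ in Ioi (0 : ℝ), 0 :=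
          setLIntegral_mono' measurableSet_Ioi fun t ht => by simpa using h_tail t ht
      _ ≤ _ := by rw [lintegral_zero]; exact zero_le
  -- `t₀` is where the two bounds `v` and `d * t ^ (-1/p)` cross.
  set t₀ := (d / v) ^ p with ht₀_def
  have ht₀ : 0 < t₀ := by positivity
  have hexp : -p⁻¹ < -1 := neg_lt_neg_iff.2 (one_lt_inv₀ hp0 |>.2 hp1)
  have hvt : v * t₀ = d ^ p * v ^ (1 - p) := by
    rw [ht₀_def, Real.div_rpow hd.le hv.le, Real.rpow_sub hv, Real.rpow_one]
    field_simp
  have hdt : d * t₀ ^ (-p⁻¹ + 1) = v * t₀ := by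
    rw [ht₀_def, ← Real.rpow_mul (by positivity), show p * (-p⁻¹ + 1) = p - 1 by field_simp; ring,
      Real.rpow_sub_one (by positivity)]
    field_simp
  have h_low : ∫⁻ t in Ioc 0 t₀, φ t ≤ ENNReal.ofReal (v * t₀) := by
    calc ∫⁻ t in Ioc 0 t₀, φ t ≤ ∫⁻ _ in Ioc 0 t₀, ENNReal.ofReal v :=
          setLIntegral_mono' measurableSet_Ioc fun t ht => hφv t ht.1
      _ = ENNReal.ofReal (v * t₀) := by
          rw [setLIntegral_const, Real.volume_Ioc, sub_zero, ENNReal.ofReal_mul hv.le]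
  have h_high : ∫⁻ t in Ioi t₀, φ t ≤ ENNReal.ofReal (v * t₀ * (p / (1 - p))) := by
    calc ∫⁻ t in Ioi t₀, φ t ≤ ∫⁻ t in Ioi t₀, ENNReal.ofReal (d * t ^ (-p⁻¹)) :=
          setLIntegral_mono' measurableSet_Ioi fun t ht => h_tail t (ht₀.trans ht)
      _ = ENNReal.ofReal (∫ t in Ioi t₀, d * t ^ (-p⁻¹)) :=
          (ofReal_integral_eq_lintegral_ofReal
            ((integrableOn_Ioi_rpow_of_lt hexp ht₀).const_mul d)
            ((ae_restrict_iff' measurableSet_Ioi).2 (ae_of_all _ fun t ht =>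
              mul_nonneg hd.le (Real.rpow_nonneg (ht₀.trans ht).le _)))).symm
      _ = ENNReal.ofReal (v * t₀ * (p / (1 - p))) := by
          have h1p : 1 - p ≠ 0 := by linarith
          have hp1' : -1 + p ≠ 0 := by linarith
          rw [integral_const_mul, integral_Ioi_rpow_of_lt hexp ht₀, mul_div_assoc', mul_neg, hdt]
          congr 1
          field_simp
          ring
  rw [← Ioc_union_Ioi_eq_Ioi ht₀.le, lintegral_union measurableSet_Ioi (Ioc_disjoint_Ioi le_rfl)]
  calc _ ≤ ENNReal.ofReal (v * t₀) + ENNReal.ofReal (v * t₀ * (p / (1 - p))) :=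
        add_le_add h_low h_high
    _ = ENNReal.ofReal (d ^ p * v ^ (1 - p) / (1 - p)) := by
        have h1p : 0 < 1 - p := by linarith
        rw [← ENNReal.ofReal_add (by positivity) (by positivity), ← hvt]
        congr 1
        field_simp
        ring

section LayerCake

variable {X : Type*} [MeasurableSpace X] {ν : Measure X}

lemma lintegral_eq_lintegral_meas_ofReal_lt {F : X → ℝ≥0∞} (hF : AEMeasurable F ν) :
    ∫⁻ x, F x ∂ν = ∫⁻ t in Ioi 0, ν {x | ENNReal.ofReal t < F x} := by
  by_cases htop : ν {x | F x = ⊤} = 0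
  · have hfin : ∀ᵐ x ∂ν, F x ≠ ⊤ := measure_eq_zero_iff_ae_notMem.1 htop
    calc ∫⁻ x, F x ∂ν = ∫⁻ x, ENNReal.ofReal (F x).toReal ∂ν :=
          lintegral_congr_ae (hfin.mono fun x hx => (ENNReal.ofReal_toReal hx).symm)
      _ = ∫⁻ t in Ioi 0, ν {x | t < (F x).toReal} :=
          lintegral_eq_lintegral_meas_lt ν (ae_of_all _ fun _ => ENNReal.toReal_nonneg)
            hF.ennreal_toReal
      _ = ∫⁻ t in Ioi 0, ν {x | ENNReal.ofReal t < F x} :=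
          setLIntegral_congr_fun measurableSet_Ioi fun t ht => measure_congr <|
            hfin.mono fun x hx => propext (ENNReal.ofReal_lt_iff_lt_toReal (le_of_lt ht) hx).symm
  · rw [lintegral_eq_top_of_measure_eq_top_ne_zero hF htop, eq_comm, eq_top_iff]
    calc ⊤ = ∫⁻ _ in Ioi (0 : ℝ), ν {x | F x = ⊤} := by
          rw [setLIntegral_const, Real.volume_Ioi, ENNReal.mul_top htop]
      _ ≤ ∫⁻ t in Ioi 0, ν {x | ENNReal.ofReal t < F x} :=
          lintegral_mono fun t => measure_mono fun x (hx : F x = ⊤) => by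
            simp [hx]

/-- Kolmogorov's inequality. -/
lemma lintegral_rpow_le_of_mul_meas_lt_le [IsFiniteMeasure ν] {F : X → ℝ≥0∞}
    (hF : AEMeasurable F ν) {p : ℝ} (hp0 : 0 < p) (hp1 : p < 1) {D : ℝ≥0∞}
    (hD : ∀ t, t * ν {x | t < F x} ≤ D) :
    ∫⁻ x, F x ^ p ∂ν ≤ ENNReal.ofReal (1 - p)⁻¹ * D ^ p * ν univ ^ (1 - p) := by
  have h1p : 0 < 1 - p := by linarith
  rcases eq_or_ne (ν univ) 0 with hV | hV
  · simp [Measure.measure_univ_eq_zero.1 hV]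
  rcases eq_or_ne D ⊤ with rfl | hDtop
  · rw [ENNReal.top_rpow_of_pos hp0, ENNReal.mul_top (by positivity),
      ENNReal.top_mul (ENNReal.rpow_pos (pos_iff_ne_zero.2 hV) (measure_ne_top ν univ)).ne']
    exact le_top
  have h_tail : ∀ t > 0, ν {x | ENNReal.ofReal t < F x ^ p} ≤
      ENNReal.ofReal (D.toReal * t ^ (-p⁻¹)) := by
    intro t ht
    have hs : 0 < t ^ p⁻¹ := Real.rpow_pos_of_pos ht _
    have hsub : {x | ENNReal.ofReal t < F x ^ p} ⊆ {x | ENNReal.ofReal (t ^ p⁻¹) < F x} :=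
      fun x hx => by
        show ENNReal.ofReal (t ^ p⁻¹) < F x
        rw [← ENNReal.ofReal_rpow_of_nonneg ht.le (inv_nonneg.2 hp0.le),
          ENNReal.rpow_inv_lt_iff hp0]
        exact hx
    calc ν {x | ENNReal.ofReal t < F x ^ p} ≤ ν {x | ENNReal.ofReal (t ^ p⁻¹) < F x} :=
          measure_mono hsub
      _ ≤ D / ENNReal.ofReal (t ^ p⁻¹) :=
          (ENNReal.le_div_iff_mul_le (Or.inl (by positivity)) (Or.inl ENNReal.ofReal_ne_top)).2
            (by rw [mul_comm]; exact hD _)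
      _ = ENNReal.ofReal (D.toReal * t ^ (-p⁻¹)) := by
          rw [← ENNReal.ofReal_toReal hDtop, ← ENNReal.ofReal_div_of_pos hs, ENNReal.toReal_ofReal
            ENNReal.toReal_nonneg, Real.rpow_neg ht.le, div_eq_mul_inv]
  rw [lintegral_eq_lintegral_meas_ofReal_lt (hF.pow_const p)]
  refine (setLIntegral_Ioi_le_of_le_min_rpow hp0 hp1
    (ENNReal.toReal_pos hV (measure_ne_top ν univ)) ENNReal.toReal_nonneg
    (fun t _ => (measure_mono (subset_univ _)).trans
      (ENNReal.ofReal_toReal (measure_ne_top ν univ)).ge)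
    h_tail).trans_eq ?_
  rw [div_eq_inv_mul, ENNReal.ofReal_mul (by positivity), ENNReal.ofReal_mul (by positivity),
    ← ENNReal.ofReal_rpow_of_nonneg ENNReal.toReal_nonneg hp0.le,
    ← ENNReal.ofReal_rpow_of_nonneg ENNReal.toReal_nonneg h1p.le,
    ENNReal.ofReal_toReal hDtop, ENNReal.ofReal_toReal (measure_ne_top ν univ), mul_assoc]

end LayerCake

section Covering

variable {E : Type*} [NormedAddCommGroup E] [NormedSpace ℝ E] [MeasurableSpace E] [BorelSpace E]
  [FiniteDimensional ℝ E] (μ : Measure E) [μ.IsAddHaarMeasure]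

lemma addHaar_closedBall_mul_radius (x : E) {k r : ℝ} (hk : 0 ≤ k) (hr : 0 ≤ r) :
    μ (closedBall x (k * r)) = ENNReal.ofReal (k ^ finrank ℝ E) * μ (closedBall x r) := by
  rw [Measure.addHaar_closedBall_mul μ x hk hr, Measure.addHaar_closedBall_center μ x r]

lemma exists_countable_pairwiseDisjoint_addHaar_biUnion_le {ι : Type*} (s : Set ι) (c : ι → E)
    (r : ι → ℝ) (hr : ∀ i ∈ s, 0 < r i) {R : ℝ} (hR : ∀ i ∈ s, r i ≤ R) :
    ∃ u ⊆ s, u.Countable ∧ u.PairwiseDisjoint (fun i => closedBall (c i) (r i)) ∧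
      μ (⋃ i ∈ s, closedBall (c i) (r i)) ≤
        ENNReal.ofReal (4 ^ finrank ℝ E) * ∑' i : u, μ (closedBall (c i) (r i)) := by
  obtain ⟨u, hus, hdisj, hcov⟩ :=
    Vitali.exists_disjoint_subfamily_covering_enlargement_closedBall s c r R hR 4 (by norm_num)
  have hu : u.Countable := hdisj.countable_of_nonempty_interior fun i hi =>
    (nonempty_ball.2 (hr i (hus hi))).mono ball_subset_interior_closedBall
  refine ⟨u, hus, hu, hdisj, ?_⟩
  calc μ (⋃ i ∈ s, closedBall (c i) (r i)) ≤ μ (⋃ i ∈ u, closedBall (c i) (4 * r i)) :=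
        measure_mono <| iUnion₂_subset fun i hi =>
          let ⟨j, hj, hsub⟩ := hcov i hi
          hsub.trans (subset_biUnion_of_mem (u := fun j => closedBall (c j) (4 * r j)) hj)
    _ ≤ ∑' i : u, μ (closedBall (c i) (4 * r i)) := measure_biUnion_le μ hu _
    _ = ENNReal.ofReal (4 ^ finrank ℝ E) * ∑' i : u, μ (closedBall (c i) (r i)) := by
        rw [← ENNReal.tsum_mul_left]
        exact tsum_congr fun i =>
          addHaar_closedBall_mul_radius μ _ (by norm_num) (hr i (hus i.2)).le

end Covering

section MaximalOperator

variable {n : ℕ}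

lemma volume_closedBall_fin (c : Fin n → ℝ) {r : ℝ} (hr : 0 ≤ r) :
    volume (closedBall c r) = ENNReal.ofReal ((2 * r) ^ n) := by
  rw [Real.volume_pi_closedBall c hr, Fintype.card_fin]

lemma le_maxOp (h : (Fin n → ℝ) → ℝ) {c x : Fin n → ℝ} {r : ℝ} (hr : 0 < r)
    (hx : x ∈ closedBall c r) :
    (∫⁻ y in closedBall c r, ENNReal.ofReal |h y|) / volume (closedBall c r) ≤ maxOp h x :=
  le_iSup_of_le c <| le_iSup_of_le r <| le_iSup_of_le hr <| le_iSup_of_le hx le_rfl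

lemma setLIntegral_closedBall_le_maxOp_mul (h : (Fin n → ℝ) → ℝ) {c x : Fin n → ℝ} {r : ℝ}
    (hr : 0 < r) (hx : x ∈ closedBall c r) :
    ∫⁻ y in closedBall c r, ENNReal.ofReal |h y| ≤ maxOp h x * volume (closedBall c r) :=
  (ENNReal.div_le_iff (measure_closedBall_pos volume c hr).ne' measure_closedBall_lt_top.ne).1
    (le_maxOp h hr hx)

lemma exists_closedBall_of_lt_maxOp {h : (Fin n → ℝ) → ℝ} {t : ℝ≥0∞} {x : Fin n → ℝ}
    (ht : t < maxOp h x) : ∃ c r, 0 < r ∧ x ∈ closedBall c r ∧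
      t * volume (closedBall c r) < ∫⁻ y in closedBall c r, ENNReal.ofReal |h y| := by
  simp only [maxOp, lt_iSup_iff] at ht
  obtain ⟨c, r, hr, hx, hlt⟩ := ht
  exact ⟨c, r, hr, hx, (ENNReal.lt_div_iff_mul_lt (Or.inl (measure_closedBall_pos volume c hr).ne')
    (Or.inl measure_closedBall_lt_top.ne)).1 hlt⟩

lemma lowerSemicontinuous_maxOp (h : (Fin n → ℝ) → ℝ) : LowerSemicontinuous (maxOp h) := by
  intro x t ht
  obtain ⟨c, r, hr, hx, hlt⟩ := exists_closedBall_of_lt_maxOp ht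
  set I := ∫⁻ y in closedBall c r, ENNReal.ofReal |h y|
  -- slightly enlarging the ball keeps the average above `t`
  have hcont : ContinuousAt (fun ρ : ℝ => t * ENNReal.ofReal ((2 * ρ) ^ n)) r :=
    ((ENNReal.continuous_const_mul (ht.trans_le le_top).ne).comp
      (ENNReal.continuous_ofReal.comp (by fun_prop))).continuousAt
  obtain ⟨ρ, hρ, hrρ⟩ : ∃ ρ, t * ENNReal.ofReal ((2 * ρ) ^ n) < I ∧ r < ρ :=
    ((eventually_nhdsWithin_of_eventually_nhds (hcont.eventually_lt continuousAt_const
      (by rwa [← volume_closedBall_fin c hr.le]))).and (self_mem_nhdsWithin (s := Ioi r))).exists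
  have hρ0 : 0 < ρ := hr.trans hrρ
  filter_upwards [isOpen_ball.mem_nhds (mem_ball.2 ((mem_closedBall.1 hx).trans_lt hrρ))]
    with x' hx'
  refine lt_of_lt_of_le ?_ (le_maxOp h hρ0 (ball_subset_closedBall hx'))
  refine (ENNReal.lt_div_iff_mul_lt (Or.inl (measure_closedBall_pos volume c hρ0).ne')
    (Or.inl measure_closedBall_lt_top.ne)).2 ?_
  rw [volume_closedBall_fin c hρ0.le]
  exact hρ.trans_le (lintegral_mono_set (closedBall_subset_closedBall hrρ.le))

lemma measurable_maxOp (h : (Fin n → ℝ) → ℝ) : Measurable (maxOp h) :=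
  (lowerSemicontinuous_maxOp h).measurable

lemma maxOp_le_maxOp_indicator_add_maxOp_indicator_compl (h : (Fin n → ℝ) → ℝ)
    {S : Set (Fin n → ℝ)} (hS : MeasurableSet S) (x : Fin n → ℝ) :
    maxOp h x ≤ maxOp (S.indicator h) x + maxOp (Sᶜ.indicator h) x := by
  refine iSup_le fun c => iSup_le fun r => iSup_le fun hr => iSup_le fun hx => ?_
  have hsplit : ∫⁻ y in closedBall c r, ENNReal.ofReal |h y| =
      (∫⁻ y in closedBall c r, ENNReal.ofReal |S.indicator h y|) +
        ∫⁻ y in closedBall c r, ENNReal.ofReal |Sᶜ.indicator h y| := by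
    simp only [ofReal_abs_indicator]
    rw [lintegral_indicator hS, lintegral_indicator hS.compl, lintegral_add_compl _ hS]
  rw [hsplit, ENNReal.add_div]
  exact add_le_add (le_maxOp _ hr hx) (le_maxOp _ hr hx)

lemma radius_le_of_mul_volume_closedBall_le (hn : n ≠ 0) {t A : ℝ≥0∞} (ht : t ≠ 0) (hA : A ≠ ⊤)
    {c : Fin n → ℝ} {r : ℝ} (hr : 0 ≤ r) (h : t * volume (closedBall c r) ≤ A) :
    r ≤ max 1 (A / t).toReal := by
  have hvol : (2 * r) ^ n ≤ (A / t).toReal := by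
    rw [← ENNReal.ofReal_le_iff_le_toReal (ENNReal.div_ne_top hA ht), ← volume_closedBall_fin c hr]
    exact (ENNReal.le_div_iff_mul_le (Or.inl ht) (Or.inr hA)).2 (by rwa [mul_comm])
  rcases le_or_gt (2 * r) 1 with h1 | h1
  · exact le_max_of_le_left (by linarith)
  · exact le_max_of_le_right (by nlinarith [le_self_pow₀ h1.le hn])

lemma mul_volume_lt_maxOp_le_of_ne_zero (hn : n ≠ 0) (g : (Fin n → ℝ) → ℝ) {t : ℝ≥0∞}
    (ht : t ≠ 0) (hA : ∫⁻ y, ENNReal.ofReal |g y| ≠ ⊤) :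
    t * volume {x | t < maxOp g x} ≤ ENNReal.ofReal (4 ^ n) * ∫⁻ y, ENNReal.ofReal |g y| := by
  choose c r hr hx hlt using fun x : {x | t < maxOp g x} => exists_closedBall_of_lt_maxOp x.2
  obtain ⟨u, -, hu, hdisj, hcover⟩ := exists_countable_pairwiseDisjoint_addHaar_biUnion_le volume
    univ c r (fun i _ => hr i) fun i _ => radius_le_of_mul_volume_closedBall_le hn ht hA (hr i).le
      ((hlt i).le.trans (setLIntegral_le_lintegral _ _))
  have := hu.to_subtype
  rw [finrank_fin_fun] at hcover
  calc t * volume {x | t < maxOp g x} ≤ t * volume (⋃ i ∈ univ, closedBall (c i) (r i)) := by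
        gcongr
        exact fun x hx' => mem_biUnion (mem_univ ⟨x, hx'⟩) (hx _)
    _ ≤ t * (ENNReal.ofReal (4 ^ n) * ∑' i : u, volume (closedBall (c i) (r i))) := by gcongr
    _ = ENNReal.ofReal (4 ^ n) * ∑' i : u, t * volume (closedBall (c i) (r i)) := by
        rw [ENNReal.tsum_mul_left]
        ring
    _ ≤ ENNReal.ofReal (4 ^ n) *
          ∑' i : u, ∫⁻ y in closedBall (c i) (r i), ENNReal.ofReal |g y| := by
        gcongr with i
        exact (hlt i).le
    _ ≤ ENNReal.ofReal (4 ^ n) * ∫⁻ y, ENNReal.ofReal |g y| := by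
        gcongr
        rw [← lintegral_iUnion (s := fun i : u => closedBall (c i) (r i))
          (fun i => measurableSet_closedBall)
          fun i j hij => hdisj i.2 j.2 (Subtype.coe_injective.ne hij)]
        exact setLIntegral_le_lintegral _ _

/-- The weak type (1,1) inequality. -/
theorem mul_volume_lt_maxOp_le (g : (Fin n → ℝ) → ℝ) (t : ℝ≥0∞) :
    t * volume {x | t < maxOp g x} ≤ ENNReal.ofReal (4 ^ n) * ∫⁻ y, ENNReal.ofReal |g y| := by
  rcases eq_or_ne t 0 with rfl | ht
  · simp
  rcases eq_or_ne (∫⁻ y, ENNReal.ofReal |g y|) ⊤ with hA | hA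
  · rw [hA, ENNReal.mul_top (by positivity)]
    exact le_top
  rcases eq_or_ne n 0 with rfl | hn
  · rcases {x | t < maxOp g x}.eq_empty_or_nonempty with hE | ⟨x, hx⟩
    · simp [hE]
    -- in dimension zero every ball is the whole space
    obtain ⟨c, r, hr, -, hlt⟩ := exists_closedBall_of_lt_maxOp hx
    calc t * volume {x | t < maxOp g x} ≤ t * volume (closedBall c r) := by
          gcongr
          exact fun y _ => by simpa [Subsingleton.elim y c] using hr.le
      _ ≤ ∫⁻ y, ENNReal.ofReal |g y| := hlt.le.trans (setLIntegral_le_lintegral _ _)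
      _ = ENNReal.ofReal (4 ^ 0) * ∫⁻ y, ENNReal.ofReal |g y| := by simp
  exact mul_volume_lt_maxOp_le_of_ne_zero hn g ht hA

lemma maxOp_indicator_compl_closedBall_le (h : (Fin n → ℝ) → ℝ) {c x z : Fin n → ℝ} {r : ℝ}
    (hx : x ∈ closedBall c r) (hz : z ∈ closedBall c r) :
    maxOp ((closedBall c (3 * r))ᶜ.indicator h) x ≤ ENNReal.ofReal (3 ^ n) * maxOp h z := by
  refine iSup_le fun c' => iSup_le fun r' => iSup_le fun hr' => iSup_le fun hx' => ?_
  by_cases hsub : closedBall c' r' ⊆ closedBall c (3 * r)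
  · have hzero : ∫⁻ y in closedBall c' r',
        ENNReal.ofReal |(closedBall c (3 * r))ᶜ.indicator h y| = 0 := by
      simp only [ofReal_abs_indicator]
      rw [setLIntegral_indicator measurableSet_closedBall.compl,
        (disjoint_compl_left.mono_right hsub).inter_eq, Measure.restrict_empty,
        lintegral_zero_measure]
    rw [hzero, ENNReal.zero_div]
    exact zero_le
  obtain ⟨w, hw, hw3⟩ := not_subset.1 hsub
  rw [mem_closedBall, not_le] at hw3
  rw [mem_closedBall] at hw hx hx' hz
  have hrr' : r < r' := by linarith [dist_triangle4 w c' x c, dist_comm c' x]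
  have hz3 : z ∈ closedBall c' (3 * r') := by
    rw [mem_closedBall]
    linarith [dist_triangle4 z c x c', dist_comm c x]
  refine ENNReal.div_le_of_le_mul ?_
  calc ∫⁻ y in closedBall c' r', ENNReal.ofReal |(closedBall c (3 * r))ᶜ.indicator h y|
      ≤ ∫⁻ y in closedBall c' (3 * r'), ENNReal.ofReal |h y| := by
        simp only [ofReal_abs_indicator]
        exact (lintegral_mono (indicator_le_self _ _)).trans
          (lintegral_mono_set (closedBall_subset_closedBall (by linarith)))
    _ ≤ maxOp h z * volume (closedBall c' (3 * r')) :=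
        setLIntegral_closedBall_le_maxOp_mul h (by linarith) hz3
    _ = ENNReal.ofReal (3 ^ n) * maxOp h z * volume (closedBall c' r') := by
        rw [addHaar_closedBall_mul_radius volume c' (by norm_num) hr'.le, finrank_fin_fun]
        ring

lemma setLIntegral_maxOp_indicator_rpow_le (h : (Fin n → ℝ) → ℝ) {p : ℝ} (hp0 : 0 < p)
    (hp1 : p < 1) {c z : Fin n → ℝ} {r : ℝ} (hr : 0 < r) (hz : z ∈ closedBall c (3 * r)) :
    ∫⁻ x in closedBall c r, maxOp ((closedBall c (3 * r)).indicator h) x ^ p ≤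
      ENNReal.ofReal (12 ^ n / (1 - p)) * volume (closedBall c r) * maxOp h z ^ p := by
  set V := volume (closedBall c r)
  have hL1 : ∫⁻ y, ENNReal.ofReal |(closedBall c (3 * r)).indicator h y| ≤
      ENNReal.ofReal (3 ^ n) * V * maxOp h z := by
    simp only [ofReal_abs_indicator]
    rw [lintegral_indicator measurableSet_closedBall]
    refine (setLIntegral_closedBall_le_maxOp_mul h (by positivity) hz).trans_eq ?_
    rw [addHaar_closedBall_mul_radius volume c (by norm_num) hr.le, finrank_fin_fun]
    ring
  have hweak : ∀ t, t * volume.restrict (closedBall c r)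
      {x | t < maxOp ((closedBall c (3 * r)).indicator h) x} ≤
        ENNReal.ofReal (12 ^ n) * V * maxOp h z := by
    intro t
    calc _ ≤ t * volume {x | t < maxOp ((closedBall c (3 * r)).indicator h) x} := by
          gcongr
          exact Measure.restrict_le_self
      _ ≤ ENNReal.ofReal (4 ^ n) * (ENNReal.ofReal (3 ^ n) * V * maxOp h z) :=
          (mul_volume_lt_maxOp_le _ t).trans (by gcongr)
      _ = ENNReal.ofReal (12 ^ n) * V * maxOp h z := by
          rw [← mul_assoc, ← mul_assoc, ← ENNReal.ofReal_mul (by positivity), ← mul_pow]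
          norm_num
  have : IsFiniteMeasure (volume.restrict (closedBall c r)) :=
    isFiniteMeasure_restrict.2 measure_closedBall_lt_top.ne
  calc _ ≤ ENNReal.ofReal (1 - p)⁻¹ * (ENNReal.ofReal (12 ^ n) * V * maxOp h z) ^ p *
        volume.restrict (closedBall c r) univ ^ (1 - p) :=
        lintegral_rpow_le_of_mul_meas_lt_le (measurable_maxOp _).aemeasurable hp0 hp1 hweak
    _ = ENNReal.ofReal (1 - p)⁻¹ * ENNReal.ofReal (12 ^ n) ^ p * (V ^ p * V ^ (1 - p)) *
        maxOp h z ^ p := by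
        rw [Measure.restrict_apply_univ, ENNReal.mul_rpow_of_nonneg _ _ hp0.le,
          ENNReal.mul_rpow_of_nonneg _ _ hp0.le]
        ring
    _ ≤ ENNReal.ofReal (1 - p)⁻¹ * ENNReal.ofReal (12 ^ n) * V * maxOp h z ^ p := by
        rw [← ENNReal.rpow_add _ _ (measure_closedBall_pos volume c hr).ne'
          measure_closedBall_lt_top.ne, add_sub_cancel, ENNReal.rpow_one]
        gcongr
        exact ENNReal.rpow_le_self_of_one_le (by simp [one_le_pow₀]) hp1.le
    _ = ENNReal.ofReal (12 ^ n / (1 - p)) * V * maxOp h z ^ p := by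
        rw [div_eq_inv_mul, ENNReal.ofReal_mul (inv_nonneg.2 (by linarith))]

lemma setLIntegral_maxOp_indicator_compl_rpow_le (h : (Fin n → ℝ) → ℝ) {p : ℝ} (hp0 : 0 < p)
    (hp1 : p ≤ 1) {c z : Fin n → ℝ} {r : ℝ} (hz : z ∈ closedBall c r) :
    ∫⁻ x in closedBall c r, maxOp ((closedBall c (3 * r))ᶜ.indicator h) x ^ p ≤
      ENNReal.ofReal (3 ^ n) * volume (closedBall c r) * maxOp h z ^ p := by
  calc _ ≤ ∫⁻ _ in closedBall c r, (ENNReal.ofReal (3 ^ n) * maxOp h z) ^ p :=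
        setLIntegral_mono' measurableSet_closedBall fun x hx =>
          ENNReal.rpow_le_rpow (maxOp_indicator_compl_closedBall_le h hx hz) hp0.le
    _ ≤ ENNReal.ofReal (3 ^ n) * volume (closedBall c r) * maxOp h z ^ p := by
        rw [setLIntegral_const, ENNReal.mul_rpow_of_nonneg _ _ hp0.le, mul_right_comm]
        gcongr
        exact ENNReal.rpow_le_self_of_one_le (by simp [one_le_pow₀]) hp1

lemma setLIntegral_maxOp_rpow_le (h : (Fin n → ℝ) → ℝ) {p : ℝ} (hp0 : 0 < p) (hp1 : p < 1)
    {c z : Fin n → ℝ} {r : ℝ} (hr : 0 < r) (hz : z ∈ closedBall c r) :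
    ∫⁻ x in closedBall c r, maxOp h x ^ p ≤
      ENNReal.ofReal (2 * 12 ^ n / (1 - p)) * volume (closedBall c r) * maxOp h z ^ p := by
  set S := closedBall c (3 * r)
  have hsplit : ∀ x, maxOp h x ^ p ≤
      maxOp (S.indicator h) x ^ p + maxOp (Sᶜ.indicator h) x ^ p := fun x =>
    (ENNReal.rpow_le_rpow (maxOp_le_maxOp_indicator_add_maxOp_indicator_compl h
      measurableSet_closedBall x) hp0.le).trans (ENNReal.rpow_add_le_add_rpow _ _ hp0.le hp1.le)
  have hconst : 12 ^ n / (1 - p) + 3 ^ n ≤ 2 * (12 : ℝ) ^ n / (1 - p) := by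
    have h3 : (3 : ℝ) ^ n ≤ 12 ^ n / (1 - p) :=
      (pow_le_pow_left₀ (by norm_num) (by norm_num) n).trans
        (le_div_self (by positivity) (by linarith) (by linarith))
    rw [mul_div_assoc, two_mul]
    linarith
  calc ∫⁻ x in closedBall c r, maxOp h x ^ p
      ≤ ∫⁻ x in closedBall c r, (maxOp (S.indicator h) x ^ p + maxOp (Sᶜ.indicator h) x ^ p) :=
        lintegral_mono hsplit
    _ = (∫⁻ x in closedBall c r, maxOp (S.indicator h) x ^ p) +
          ∫⁻ x in closedBall c r, maxOp (Sᶜ.indicator h) x ^ p :=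
        lintegral_add_left ((measurable_maxOp _).pow_const p) _
    _ ≤ ENNReal.ofReal (12 ^ n / (1 - p)) * volume (closedBall c r) * maxOp h z ^ p +
          ENNReal.ofReal (3 ^ n) * volume (closedBall c r) * maxOp h z ^ p :=
        add_le_add (setLIntegral_maxOp_indicator_rpow_le h hp0 hp1 hr
            (closedBall_subset_closedBall (by linarith) hz))
          (setLIntegral_maxOp_indicator_compl_rpow_le h hp0 hp1.le hz)
    _ ≤ ENNReal.ofReal (2 * 12 ^ n / (1 - p)) * volume (closedBall c r) * maxOp h z ^ p := by
        rw [← add_mul, ← add_mul, ← ENNReal.ofReal_add (by bound) (by positivity)]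
        gcongr

lemma setLIntegral_maxOp_rpow_le_essInf (h : (Fin n → ℝ) → ℝ) {p : ℝ} (hp0 : 0 < p) (hp1 : p < 1)
    (c : Fin n → ℝ) {r : ℝ} (hr : 0 < r) :
    ∫⁻ x in closedBall c r, maxOp h x ^ p ≤ ENNReal.ofReal (2 * 12 ^ n / (1 - p)) *
      essInf (fun x => maxOp h x ^ p) (volume.restrict (closedBall c r)) *
        volume (closedBall c r) := by
  rw [mul_right_comm]
  have h1p : 0 < 1 - p := by linarith
  exact le_mul_essInf_of_forall_mem measurableSet_closedBall
    (mul_ne_zero (by positivity) (measure_closedBall_pos volume c hr).ne')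
    (ENNReal.mul_ne_top ENNReal.ofReal_ne_top measure_closedBall_lt_top.ne)
    fun z hz => setLIntegral_maxOp_rpow_le h hp0 hp1 hr hz

lemma isA1_of_setLIntegral_closedBall_le {u : (Fin n → ℝ) → ℝ} {C : ℝ}
    (hu0 : ∀ x, 0 ≤ u x) (hu : Measurable u)
    (hball : ∀ (c : Fin n → ℝ) (r : ℝ), 0 < r →
      ∫⁻ x in closedBall c r, ENNReal.ofReal (u x) ≤ ENNReal.ofReal C *
        essInf (fun y => ENNReal.ofReal (u y)) (volume.restrict (closedBall c r)) *
          volume (closedBall c r)) :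
    IsA1 u C := by
  refine ⟨hu0, fun x => ⟨closedBall x 1, closedBall_mem_nhds x one_pos,
    hu.aestronglyMeasurable, ?_⟩, hball⟩
  have : (ae (volume.restrict (closedBall x 1))).NeBot :=
    ae_neBot.2 (Measure.restrict_eq_zero.not.2 (measure_closedBall_pos volume x one_pos).ne')
  obtain ⟨y, hy⟩ := (ae_essInf_le (μ := volume.restrict (closedBall x 1))
    (f := fun y => ENNReal.ofReal (u y))).exists
  refine (hasFiniteIntegral_iff_ofReal (ae_of_all _ hu0)).2 <| (hball x 1 one_pos).trans_lt ?_
  exact ENNReal.mul_lt_top (ENNReal.mul_lt_top ENNReal.ofReal_lt_top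
    (hy.trans_lt ENNReal.ofReal_lt_top)) measure_closedBall_lt_top

end MaximalOperator

/-- Coifman–Rochberg: for each dimension `n` there is `C_n > 0` such that whenever
`h ∈ L¹_loc(ℝⁿ)` with `Mh < ∞` a.e. and `0 < μ < 1`, the weight `(Mh)^μ` is in `A₁`
with constant at most `C_n/(1 − μ)`. -/
theorem coifman_rochberg (n : ℕ) :
    ∃ C : ℝ, 0 < C ∧
      ∀ (h : (Fin n → ℝ) → ℝ), MeasureTheory.LocallyIntegrable h volume →
        (∀ᵐ x, maxOp h x < ⊤) →
        ∀ μ : ℝ, 0 < μ → μ < 1 →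
          IsA1 (fun x => (maxOp h x).toReal ^ μ) (C / (1 - μ)) := by
  refine ⟨2 * 12 ^ n, by positivity, fun h _ hfin μ hμ0 hμ1 => ?_⟩
  have hae : (fun x => ENNReal.ofReal ((maxOp h x).toReal ^ μ)) =ᵐ[volume]
      fun x => maxOp h x ^ μ := hfin.mono fun x hx => by
    dsimp only
    rw [ENNReal.toReal_rpow, ENNReal.ofReal_toReal (ENNReal.rpow_ne_top_of_nonneg hμ0.le hx.ne)]
  refine isA1_of_setLIntegral_closedBall_le (fun x => by positivity)
    ((measurable_maxOp h).ennreal_toReal.pow_const μ) fun c r hr => ?_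
  rw [lintegral_congr_ae (ae_restrict_of_ae hae), essInf_congr_ae (ae_restrict_of_ae hae)]
  exact setLIntegral_maxOp_rpow_le_essInf h hμ0 hμ1 c hr
end

section
/- (Fefferman–Stein inequality) Let w be any weight on ℝⁿ (nonnegative, locally integrable). Then for all f ∈ L¹(Mw) and all λ > 0, w({x : Mf(x) > λ}) ≤ (C_n/λ) ∫_{ℝⁿ} |f(x)| Mw(x) dx, where C_n depends only on n. -/
open MeasureTheory ENNReal NNReal Set Filter

/-- Fefferman–Stein inequality: for each dimension `n` there is `C_n > 0` such that for
every weight `w`, every `f ∈ L¹(Mw)` and every `λ > 0`,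
`λ · w({Mf > λ}) ≤ C_n ∫ |f| Mw`. -/
theorem fefferman_stein (n : ℕ) :
    ∃ C : ℝ, 0 < C ∧
      ∀ (w f : (Fin n → ℝ) → ℝ), (∀ x, 0 ≤ w x) →
        MeasureTheory.LocallyIntegrable w volume →
        (∫⁻ x, ENNReal.ofReal |f x| * maxOp w x) < ⊤ →
        ∀ lam : ℝ, 0 < lam →
          ENNReal.ofReal lam * wInt w {x | ENNReal.ofReal lam < maxOp f x} ≤
            ENNReal.ofReal C * ∫⁻ x, ENNReal.ofReal |f x| * maxOp w x := by
  obtain ⟨N, τ, hτ, hN⟩ := HasBesicovitchCovering.no_satelliteConfig (α := (Fin n → ℝ))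
  refine ⟨2 ^ n * N + 1, by positivity, ?_⟩
  intro w f hw hloc _hfin lam hlam
  set ν : ℝ≥0∞ := ∫⁻ x, ENNReal.ofReal |f x| * maxOp w x with hν
  set μw : Measure (Fin n → ℝ) := volume.withDensity (fun x => ENNReal.ofReal (w x)) with hμw
  -- per-ball estimate
  have keyA : ∀ (x : Fin n → ℝ) (ρ : ℝ), 0 < ρ →
      ENNReal.ofReal lam * volume (Metric.closedBall x ρ)
        ≤ ENNReal.ofReal ((2:ℝ) ^ n) * ∫⁻ y in Metric.closedBall x ρ, ENNReal.ofReal |f y| →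
      ENNReal.ofReal lam * μw (Metric.closedBall x ρ) ≤
        ENNReal.ofReal ((2:ℝ) ^ n) *
          ∫⁻ y in Metric.closedBall x ρ, ENNReal.ofReal |f y| * maxOp w y := by
    intro x ρ hρ hball
    set B := Metric.closedBall x ρ with hB
    have hBmeas : MeasurableSet B := measurableSet_closedBall
    have hVol : volume B = ENNReal.ofReal ((2 * ρ) ^ n) := by
      simpa using Real.volume_pi_closedBall x hρ.le
    have hV0 : volume B ≠ 0 := by
      rw [hVol]
      simp only [ne_eq, ENNReal.ofReal_eq_zero, not_le]
      positivity
    have hVtop : volume B ≠ ∞ := by rw [hVol]; exact ofReal_ne_top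
    have hμB : μw B = ∫⁻ y in B, ENNReal.ofReal (w y) := withDensity_apply _ hBmeas
    have hμBfin : μw B ≠ ∞ := by
      rw [hμB]
      have h1 : (∫⁻ y in B, ENNReal.ofReal (w y)) = ∫⁻ y in B, ↑‖w y‖₊ :=
        lintegral_congr fun y => (Real.enorm_eq_ofReal (hw y)).symm
      rw [h1]
      exact (hloc.integrableOn_isCompact (isCompact_closedBall x ρ)).2.ne
    set A := μw B / volume B with hA
    have hAfin : A ≠ ∞ := (ENNReal.div_lt_top hμBfin hV0).ne
    have hAle : ∀ y ∈ B, A ≤ maxOp w y := by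
      intro y hy
      have hAeq : A = (∫⁻ z in B, ENNReal.ofReal |w z|) / volume B := by
        rw [hA, hμB]
        congr 1
        exact lintegral_congr fun z => by rw [abs_of_nonneg (hw z)]
      rw [hAeq, maxOp]
      exact le_iSup_of_le x (le_iSup_of_le ρ (le_iSup_of_le hρ (le_iSup_of_le hy le_rfl)))
    calc ENNReal.ofReal lam * μw B
        = ENNReal.ofReal lam * (A * volume B) := by
          rw [hA, ENNReal.div_mul_cancel hV0 hVtop]
      _ = A * (ENNReal.ofReal lam * volume B) := by ring
      _ ≤ A * (ENNReal.ofReal ((2:ℝ)^n) * ∫⁻ y in B, ENNReal.ofReal |f y|) :=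
          mul_le_mul_right hball _
      _ = ENNReal.ofReal ((2:ℝ)^n) * (A * ∫⁻ y in B, ENNReal.ofReal |f y|) := by ring
      _ = ENNReal.ofReal ((2:ℝ)^n) * ∫⁻ y in B, A * ENNReal.ofReal |f y| := by
          rw [lintegral_const_mul' A _ hAfin]
      _ ≤ ENNReal.ofReal ((2:ℝ)^n) * ∫⁻ y in B, ENNReal.ofReal |f y| * maxOp w y := by
          refine mul_le_mul_right (lintegral_mono_ae ?_) _
          refine ae_restrict_of_forall_mem hBmeas fun y hy => ?_
          rw [mul_comm]
          exact mul_le_mul_right (hAle y hy) _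
  -- from the maximal function condition to a centered ball
  have keyB : ∀ x, ENNReal.ofReal lam < maxOp f x → ∃ ρ : ℝ, 0 < ρ ∧
      ENNReal.ofReal lam * volume (Metric.closedBall x ρ)
        ≤ ENNReal.ofReal ((2:ℝ) ^ n) * ∫⁻ y in Metric.closedBall x ρ, ENNReal.ofReal |f y| := by
    intro x hx
    simp only [maxOp, lt_iSup_iff] at hx
    obtain ⟨c, r, hr, hxc, hlt⟩ := hx
    have hVc : volume (Metric.closedBall c r) = ENNReal.ofReal ((2*r)^n) := by
      simpa using Real.volume_pi_closedBall c hr.le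
    have h0 : volume (Metric.closedBall c r) ≠ 0 := by
      rw [hVc]
      simp only [ne_eq, ENNReal.ofReal_eq_zero, not_le]
      positivity
    have htop : volume (Metric.closedBall c r) ≠ ∞ := by rw [hVc]; exact ofReal_ne_top
    have hmul : ENNReal.ofReal lam * volume (Metric.closedBall c r)
        ≤ ∫⁻ y in Metric.closedBall c r, ENNReal.ofReal |f y| :=
      le_of_lt ((ENNReal.lt_div_iff_mul_lt (Or.inl h0) (Or.inl htop)).1 hlt)
    refine ⟨2 * r, by linarith, ?_⟩
    have hsub : Metric.closedBall c r ⊆ Metric.closedBall x (2*r) := by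
      intro y hy
      rw [Metric.mem_closedBall] at hy ⊢
      have h1 : dist x c ≤ r := Metric.mem_closedBall.1 hxc
      calc dist y x ≤ dist y c + dist c x := dist_triangle y c x
        _ = dist y c + dist x c := by rw [dist_comm c x]
        _ ≤ r + r := add_le_add hy h1
        _ = 2 * r := by ring
    have hVx : volume (Metric.closedBall x (2*r))
        = ENNReal.ofReal ((2:ℝ)^n) * volume (Metric.closedBall c r) := by
      have : volume (Metric.closedBall x (2*r)) = ENNReal.ofReal ((2*(2*r))^n) := by
        simpa using Real.volume_pi_closedBall x (by linarith : (0:ℝ) ≤ 2*r)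
      rw [this, hVc, ← ENNReal.ofReal_mul (by positivity)]
      congr 1
      rw [← mul_pow]
    calc ENNReal.ofReal lam * volume (Metric.closedBall x (2*r))
        = ENNReal.ofReal ((2:ℝ)^n) * (ENNReal.ofReal lam * volume (Metric.closedBall c r)) := by
          rw [hVx]; ring
      _ ≤ ENNReal.ofReal ((2:ℝ)^n) * ∫⁻ y in Metric.closedBall c r, ENNReal.ofReal |f y| :=
          mul_le_mul_right hmul _
      _ ≤ ENNReal.ofReal ((2:ℝ)^n) * ∫⁻ y in Metric.closedBall x (2*r), ENNReal.ofReal |f y| :=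
          mul_le_mul_right (lintegral_mono_set hsub) _
  -- the truncated level sets
  set Ek : ℕ → Set (Fin n → ℝ) := fun k => {x | ∃ ρ : ℝ, 0 < ρ ∧ ρ ≤ (k:ℝ) ∧
      ENNReal.ofReal lam * volume (Metric.closedBall x ρ)
        ≤ ENNReal.ofReal ((2:ℝ) ^ n) * ∫⁻ y in Metric.closedBall x ρ, ENNReal.ofReal |f y|}
    with hEk
  have hmemEk : ∀ (k : ℕ) (b : ↥(Ek k)), ∃ ρ : ℝ, 0 < ρ ∧ ρ ≤ (k:ℝ) ∧
      ENNReal.ofReal lam * volume (Metric.closedBall (b:Fin n → ℝ) ρ)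
        ≤ ENNReal.ofReal ((2:ℝ) ^ n) *
            ∫⁻ y in Metric.closedBall (b:Fin n → ℝ) ρ, ENNReal.ofReal |f y| :=
    fun k b => b.2
  have hmono : Monotone Ek := by
    intro k l hkl x hx
    obtain ⟨ρ, h1, h2, h3⟩ := hx
    exact ⟨ρ, h1, h2.trans (Nat.cast_le.2 hkl), h3⟩
  have hEsub : {x | ENNReal.ofReal lam < maxOp f x} ⊆ ⋃ k, Ek k := by
    intro x hx
    obtain ⟨ρ, hρ, hb⟩ := keyB x hx
    exact mem_iUnion.2 ⟨⌈ρ⌉₊, ρ, hρ, Nat.le_ceil ρ, hb⟩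
  -- the Besicovitch step
  have step3 : ∀ k : ℕ, ENNReal.ofReal lam * μw (Ek k)
      ≤ (N : ℝ≥0∞) * (ENNReal.ofReal ((2:ℝ)^n) * ν) := by
    intro k
    set pk : Besicovitch.BallPackage (↥(Ek k)) (Fin n → ℝ) :=
      { c := fun b => (b : Fin n → ℝ)
        r := fun b => Classical.choose (hmemEk k b)
        rpos := fun b => (Classical.choose_spec (hmemEk k b)).1
        r_bound := (k : ℝ)
        r_le := fun b => (Classical.choose_spec (hmemEk k b)).2.1 } with hpk
    obtain ⟨S, hSd, hScov⟩ := Besicovitch.exist_disjoint_covering_families hτ hN pk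
    have hcount : ∀ i, (S i).Countable := fun i =>
      (hSd i).countable_of_nonempty_interior fun b _ =>
        ⟨pk.c b, Metric.ball_subset_interior_closedBall (Metric.mem_ball_self (pk.rpos b))⟩
    have hUcov : Ek k ⊆ ⋃ i : Fin N, ⋃ b ∈ S i, Metric.closedBall (pk.c b) (pk.r b) := by
      intro x hx
      have hx' : x ∈ ⋃ i : Fin N, ⋃ b ∈ S i, Metric.ball (pk.c b) (pk.r b) :=
        hScov ⟨⟨x, hx⟩, rfl⟩
      exact (iUnion_mono fun i => iUnion₂_mono fun b _ => Metric.ball_subset_closedBall) hx'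
    have perfam : ∀ i : Fin N,
        ENNReal.ofReal lam * μw (⋃ b ∈ S i, Metric.closedBall (pk.c b) (pk.r b))
          ≤ ENNReal.ofReal ((2:ℝ)^n) * ν := by
      intro i
      have hμU : μw (⋃ b ∈ S i, Metric.closedBall (pk.c b) (pk.r b))
          = ∑' b : ↥(S i), μw (Metric.closedBall (pk.c b) (pk.r b)) :=
        measure_biUnion (hcount i) (hSd i) fun b _ => measurableSet_closedBall
      rw [hμU, ← ENNReal.tsum_mul_left]
      calc ∑' b : ↥(S i), ENNReal.ofReal lam * μw (Metric.closedBall (pk.c b) (pk.r b))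
          ≤ ∑' b : ↥(S i), ENNReal.ofReal ((2:ℝ)^n) *
              ∫⁻ y in Metric.closedBall (pk.c b) (pk.r b),
                ENNReal.ofReal |f y| * maxOp w y :=
            ENNReal.tsum_le_tsum fun b =>
              keyA _ _ (pk.rpos b) (Classical.choose_spec (hmemEk k b)).2.2
        _ = ENNReal.ofReal ((2:ℝ)^n) * ∑' b : ↥(S i),
              ∫⁻ y in Metric.closedBall (pk.c b) (pk.r b),
                ENNReal.ofReal |f y| * maxOp w y := ENNReal.tsum_mul_left
        _ = ENNReal.ofReal ((2:ℝ)^n) *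
              ∫⁻ y in ⋃ b ∈ S i, Metric.closedBall (pk.c b) (pk.r b),
                ENNReal.ofReal |f y| * maxOp w y := by
            rw [lintegral_biUnion₀ (hcount i)
              (fun b _ => measurableSet_closedBall.nullMeasurableSet)
              ((hSd i).mono' fun b c h => h.aedisjoint) _]
        _ ≤ ENNReal.ofReal ((2:ℝ)^n) * ν :=
            mul_le_mul_right (lintegral_mono' Measure.restrict_le_self le_rfl) _
    calc ENNReal.ofReal lam * μw (Ek k)
        ≤ ENNReal.ofReal lam *
            ∑ i : Fin N, μw (⋃ b ∈ S i, Metric.closedBall (pk.c b) (pk.r b)) := by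
          refine mul_le_mul_right ((measure_mono hUcov).trans ?_) _
          exact measure_iUnion_fintype_le _ _
      _ = ∑ i : Fin N, ENNReal.ofReal lam *
            μw (⋃ b ∈ S i, Metric.closedBall (pk.c b) (pk.r b)) := Finset.mul_sum _ _ _
      _ ≤ ∑ _i : Fin N, ENNReal.ofReal ((2:ℝ)^n) * ν := Finset.sum_le_sum fun i _ => perfam i
      _ = (N : ℝ≥0∞) * (ENNReal.ofReal ((2:ℝ)^n) * ν) := by
          simp [Finset.sum_const, nsmul_eq_mul]
  -- assemble
  have hwle : wInt w {x | ENNReal.ofReal lam < maxOp f x} ≤ ⨆ k, μw (Ek k) := by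
    calc wInt w {x | ENNReal.ofReal lam < maxOp f x}
        ≤ μw {x | ENNReal.ofReal lam < maxOp f x} := withDensity_apply_le _ _
      _ ≤ μw (⋃ k, Ek k) := measure_mono hEsub
      _ = ⨆ k, μw (Ek k) := hmono.measure_iUnion
  calc ENNReal.ofReal lam * wInt w {x | ENNReal.ofReal lam < maxOp f x}
      ≤ ENNReal.ofReal lam * ⨆ k, μw (Ek k) := mul_le_mul_right hwle _
    _ = ⨆ k, ENNReal.ofReal lam * μw (Ek k) := by rw [ENNReal.mul_iSup]
    _ ≤ (N : ℝ≥0∞) * (ENNReal.ofReal ((2:ℝ)^n) * ν) := iSup_le step3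
    _ ≤ ENNReal.ofReal (2 ^ n * N + 1) * ν := by
        rw [← mul_assoc]
        refine mul_le_mul_left ?_ ν
        rw [← ENNReal.ofReal_natCast N, ← ENNReal.ofReal_mul (Nat.cast_nonneg N)]
        refine ENNReal.ofReal_le_ofReal ?_
        rw [mul_comm]
        linarith
end
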